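/- arXiv:1311.4209 — 6 statements merged into one kernel-verified Lean document; each statement's English description precedes it below -/
import Mathlib

section
/- For every integer n ≥ 3, Σ_{k=1}^{n} cos²(π(2k-1)/(2n)) / (1 - cos²(π(2k-1)/(2n)))^{3/2} > Σ_{k=1}^{n-1} csc(πk/n). -/
/-!
Write `a k = csc θ k` with `θ k = π (2k - 1) / (2n)`. The `k`-th summand on the left is
`cos² θ / sin³ θ = a k ^ 3 - a k`. The angle `π k / n` is the midpoint of `θ k` and `θ (k + 1)`,
so by convexity of `csc` on `(0, π)` the right side is at most
`∑ (a k + a (k + 1)) / 2 = ∑ a k - (a 1 + a n) / 2`. As `a ^ 3 - 2 a + 1 ≥ 0` for `a ≥ 1`, it remains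
to see `a 1 ^ 3 - 2 a 1 ≥ n`, which follows from `a 1 = csc (π / 2n) > 2n / π`.
-/

open Real Finset

lemma Finset.sum_Icc_add_succ {M : Type*} [AddCommMonoid M] (f : ℕ → M) (m : ℕ) :
    ∑ k ∈ Icc 1 m, (f k + f (k + 1)) + f 1 + f (m + 1) = 2 • ∑ k ∈ Icc 1 (m + 1), f k := by
  induction m with
  | zero => simp [two_smul]
  | succ m ih =>
    rw [sum_Icc_succ_top (by omega), sum_Icc_succ_top (show 1 ≤ m + 1 + 1 by omega), smul_add,
      ← ih]
    simp only [two_smul]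
    abel

lemma inv_sin_midpoint_le {x y : ℝ} (hx : 0 < x) (hxπ : x < π) (hy : 0 < y) (hyπ : y < π) :
    (sin ((x + y) / 2))⁻¹ ≤ ((sin x)⁻¹ + (sin y)⁻¹) / 2 := by
  have hsx := sin_pos_of_pos_of_lt_pi hx hxπ
  have hsy := sin_pos_of_pos_of_lt_pi hy hyπ
  have hsm : 0 < sin ((x + y) / 2) := sin_pos_of_pos_of_lt_pi (by linarith) (by linarith)
  have hsin_add : sin x + sin y ≤ 2 * sin ((x + y) / 2) := by
    rw [sin_add_sin]
    exact mul_le_of_le_one_right (by positivity) (cos_le_one _)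
  calc (sin ((x + y) / 2))⁻¹ ≤ 2 / (sin x + sin y) := by
        rw [inv_le_comm₀ hsm (by positivity), inv_div]; linarith
    _ ≤ ((sin x)⁻¹ + (sin y)⁻¹) / 2 := by
        rw [div_le_iff₀ (by positivity)]
        field_simp
        nlinarith [sq_nonneg (sin x - sin y)]

lemma cos_sq_div_one_sub_cos_sq_rpow {θ : ℝ} (h : 0 < sin θ) :
    cos θ ^ 2 / (1 - cos θ ^ 2) ^ ((3 : ℝ) / 2) = (sin θ)⁻¹ ^ 3 - (sin θ)⁻¹ := by
  have hpow : (sin θ ^ 2) ^ ((3 : ℝ) / 2) = sin θ ^ 3 := by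
    rw [← rpow_natCast, ← rpow_mul h.le, ← rpow_natCast]
    norm_num
  rw [← sin_sq, hpow, cos_sq']
  field_simp

lemma inv_lt_inv_sin {x : ℝ} (hx : 0 < x) (hxπ : x < π) : x⁻¹ < (sin x)⁻¹ :=
  inv_strictAnti₀ (sin_pos_of_pos_of_lt_pi hx hxπ) (sin_lt hx)

lemma le_cube_sub_two_mul_of_two_mul_div_pi_lt {t x : ℝ} (ht : 3 ≤ t) (hx : 2 * t / π < x) :
    t ≤ x ^ 3 - 2 * x := by
  have hπ3 := pi_gt_three
  have hπ := pi_lt_d2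
  rw [div_lt_iff₀ pi_pos] at hx
  have hx19 : 1.9 < x := by nlinarith
  have hsq : π / 2 < x ^ 2 - 2 := by nlinarith
  nlinarith [mul_lt_mul_of_pos_left hsq (by linarith : 0 < x)]

lemma sum_adjacent_avg_lt_sum_cube_sub (f : ℕ → ℝ) {n : ℕ} (hn : 1 ≤ n)
    (hf : ∀ k ∈ Icc 1 n, 1 ≤ f k) (h1 : n ≤ f 1 ^ 3 - 2 * f 1) :
    ∑ k ∈ Icc 1 (n - 1), (f k + f (k + 1)) / 2 < ∑ k ∈ Icc 1 n, (f k ^ 3 - f k) := by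
  obtain ⟨m, rfl⟩ : ∃ m, n = m + 1 := ⟨n - 1, by omega⟩
  -- `f ^ 3 - 2 f + 1 = (f - 1) (f ^ 2 + f - 1)`
  have hcube : ∀ k ∈ Icc 1 (m + 1), 0 ≤ f k ^ 3 - 2 * f k + 1 := fun k hk => by
    nlinarith [hf k hk, mul_nonneg (sub_nonneg.2 (hf k hk)) (sq_nonneg (f k))]
  have hsingle := single_le_sum hcube (left_mem_Icc.2 (by omega))
  have hf1 := hf 1 (left_mem_Icc.2 (by omega))
  have hfn := hf (m + 1) (right_mem_Icc.2 (by omega))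
  have htel := sum_Icc_add_succ f m
  simp only [sum_add_distrib, sum_sub_distrib, ← mul_sum, sum_const, Nat.card_Icc,
    nsmul_eq_mul, Nat.add_sub_cancel, mul_one] at hsingle htel ⊢
  rw [← sum_div, sum_add_distrib]
  push_cast at h1 hsingle htel
  linarith

lemma pi_mul_two_mul_sub_one_div_mem_Ioo {n k : ℕ} (hk : k ∈ Icc 1 n) :
    π * (2 * k - 1) / (2 * n) ∈ Set.Ioo 0 π := by
  obtain ⟨hk1, hkn⟩ := mem_Icc.1 hk
  have hk1' : (1 : ℝ) ≤ k := by exact_mod_cast hk1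
  have hkn' : (k : ℝ) ≤ n := by exact_mod_cast hkn
  constructor
  · exact div_pos (mul_pos pi_pos (by linarith)) (by linarith)
  · rw [div_lt_iff₀ (by linarith)]
    nlinarith [pi_pos]

lemma inv_sin_pi_mul_div_le {n k : ℕ} (hk : k ∈ Icc 1 (n - 1)) :
    (sin (π * k / n))⁻¹ ≤ ((sin (π * (2 * k - 1) / (2 * n)))⁻¹ +
      (sin (π * (2 * (k + 1 : ℕ) - 1) / (2 * n)))⁻¹) / 2 := by
  obtain ⟨hk1, hkn⟩ := mem_Icc.1 hk
  obtain ⟨hx, hxπ⟩ := pi_mul_two_mul_sub_one_div_mem_Ioo (n := n) (k := k) (by simp; omega)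
  obtain ⟨hy, hyπ⟩ := pi_mul_two_mul_sub_one_div_mem_Ioo (n := n) (k := k + 1) (by simp; omega)
  have hmid : π * k / n =
      (π * (2 * k - 1) / (2 * n) + π * (2 * (k + 1 : ℕ) - 1) / (2 * n)) / 2 := by
    have : (n : ℝ) ≠ 0 := by norm_cast; omega
    push_cast
    field_simp
    ring
  rw [hmid]
  exact inv_sin_midpoint_le hx hxπ hy hyπ

lemma natCast_le_inv_sin_pi_div_cube_sub {n : ℕ} (hn : 3 ≤ n) :
    (n : ℝ) ≤ (sin (π / (2 * n)))⁻¹ ^ 3 - 2 * (sin (π / (2 * n)))⁻¹ := by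
  have hn' : (3 : ℝ) ≤ n := by exact_mod_cast hn
  refine le_cube_sub_two_mul_of_two_mul_div_pi_lt hn' ?_
  rw [← inv_div]
  exact inv_lt_inv_sin (by positivity) (by rw [div_lt_iff₀ (by positivity)]; nlinarith [pi_pos])

theorem gzero_gt_one (n : ℕ) (hn : 3 ≤ n) :
    (∑ k ∈ Finset.Icc 1 n,
        Real.cos (π * (2 * k - 1) / (2 * n)) ^ 2 /
          (1 - Real.cos (π * (2 * k - 1) / (2 * n)) ^ 2) ^ ((3 : ℝ) / 2)) >
      ∑ k ∈ Finset.Icc 1 (n - 1), 1 / Real.sin (π * k / n) := by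
  have hsin : ∀ k ∈ Icc 1 n, 0 < sin (π * (2 * k - 1) / (2 * n)) := fun k hk =>
    have hθ := pi_mul_two_mul_sub_one_div_mem_Ioo hk
    sin_pos_of_pos_of_lt_pi hθ.1 hθ.2
  have hθ₁ : π * (2 * ((1 : ℕ) : ℝ) - 1) / (2 * n) = π / (2 * n) := by norm_num
  rw [gt_iff_lt, sum_congr rfl fun k hk => cos_sq_div_one_sub_cos_sq_rpow (hsin k hk)]
  calc ∑ k ∈ Icc 1 (n - 1), 1 / sin (π * k / n)
      ≤ ∑ k ∈ Icc 1 (n - 1), ((sin (π * (2 * k - 1) / (2 * n)))⁻¹ +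
          (sin (π * (2 * (k + 1 : ℕ) - 1) / (2 * n)))⁻¹) / 2 :=
        sum_le_sum fun k hk => by rw [one_div]; exact inv_sin_pi_mul_div_le hk
    _ < _ := sum_adjacent_avg_lt_sum_cube_sub (fun k : ℕ => (sin (π * (2 * k - 1) / (2 * n)))⁻¹)
        (by omega) (fun k hk => (one_le_inv₀ (hsin k hk)).2 (sin_le_one _))
        (by simpa only [hθ₁] using natCast_le_inv_sin_pi_div_cube_sub hn)
end

section
/- For every integer n ≥ 2, (1/S_n) · Σ_{k=1}^{n} c_k² / (1 - c_k²/2)^{3/2} ≤ 2√2, where c_k = cos(π(2k-1)/(2n)) and S_n = Σ_{k=1}^{n-1} csc(πk/n). -/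
/-!
Since `c² ≤ 1`, each denominator `(1 - c²/2)^{3/2}` is at least `(1/2)^{3/2} = 1/(2√2)`, so the
numerator sum is at most `2√2 · Σ c_k² = 2√2 · n/2`, the last identity because the `n`-th roots of
unity sum to zero. Every cosecant `csc(πk/n)` is at least `1`, so `S_n ≥ n - 1 ≥ n/2`.
-/

open Real Finset

theorem sum_range_cos_add_two_pi_mul_div (θ : ℝ) {n : ℕ} (hn : 1 < n) :
    ∑ i ∈ range n, cos (θ + 2 * π * i / n) = 0 := by
  have hζ := Complex.isPrimitiveRoot_exp n (by omega)
  have hexp : ∑ i ∈ range n, Complex.exp (↑(θ + 2 * π * i / n) * Complex.I)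
      = Complex.exp (θ * Complex.I) * ∑ i ∈ range n, Complex.exp (2 * π * Complex.I / n) ^ i := by
    rw [mul_sum]
    refine sum_congr rfl fun i _ => ?_
    rw [← Complex.exp_nat_mul, ← Complex.exp_add]
    push_cast
    ring_nf
  simpa [← Complex.exp_ofReal_mul_I_re, ← Complex.re_sum, hζ.geom_sum_eq_zero hn] using
    congrArg Complex.re hexp

theorem sum_cos_sq_chebyshev_nodes (n : ℕ) (hn : 1 < n) :
    ∑ k ∈ Icc 1 n, cos (π * (2 * k - 1) / (2 * n)) ^ 2 = n / 2 := by
  have hn0 : (n : ℝ) ≠ 0 := by positivity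
  have hdouble : ∀ i ∈ range n, cos (π * (2 * ↑(1 + i) - 1) / (2 * n)) ^ 2
      = (1 + cos (π / n + 2 * π * i / n)) / 2 := by
    intro i _
    rw [cos_sq, add_div]
    congr 3
    push_cast
    field_simp
    ring
  rw [← Ico_add_one_right_eq_Icc, sum_Ico_eq_sum_range, Nat.add_sub_cancel, sum_congr rfl hdouble,
    ← sum_div, sum_add_distrib, sum_range_cos_add_two_pi_mul_div _ hn]
  simp

theorem one_le_one_div_sin {x : ℝ} (h0 : 0 < x) (hπ : x < π) : 1 ≤ 1 / sin x :=
  one_le_one_div (sin_pos_of_pos_of_lt_pi h0 hπ) (sin_le_one x)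

theorem sub_one_le_sum_one_div_sin_pi_mul_div (n : ℕ) :
    (n : ℝ) - 1 ≤ ∑ k ∈ Icc 1 (n - 1), 1 / sin (π * k / n) := by
  rcases Nat.eq_zero_or_pos n with rfl | hn
  · simp
  have hcard : ((Icc 1 (n - 1)).card : ℝ) = n - 1 := by
    rw [Nat.card_Icc, Nat.add_sub_cancel, Nat.cast_sub hn]
    simp
  rw [← hcard, ← nsmul_one]
  refine card_nsmul_le_sum _ _ _ fun k hk => one_le_one_div_sin ?_ ?_
  · have hk : 1 ≤ k := (mem_Icc.1 hk).1
    positivity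
  · have hk : (k : ℝ) < n := by
      have := (mem_Icc.1 hk).2
      exact_mod_cast (by omega : k < n)
    rw [mul_div_assoc]
    exact mul_lt_of_lt_one_right pi_pos ((div_lt_one (by positivity)).2 hk)

theorem two_rpow_three_halves : (2 : ℝ) ^ ((3 : ℝ) / 2) = 2 * √2 := by
  rw [show (3 : ℝ) / 2 = 1 + 1 / 2 by norm_num, rpow_add two_pos, rpow_one, sqrt_eq_rpow]

theorem sq_div_one_sub_sq_div_two_rpow_le {c : ℝ} (hc : c ^ 2 ≤ 1) :
    c ^ 2 / (1 - c ^ 2 / 2) ^ ((3 : ℝ) / 2) ≤ 2 * √2 * c ^ 2 := by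
  calc c ^ 2 / (1 - c ^ 2 / 2) ^ ((3 : ℝ) / 2) ≤ c ^ 2 / (1 / 2) ^ ((3 : ℝ) / 2) := by
        gcongr
        linarith
    _ = 2 * √2 * c ^ 2 := by
        rw [div_rpow zero_le_one zero_le_two, one_rpow, two_rpow_three_halves]
        field_simp

theorem g_pi_quarter_le (n : ℕ) (hn : 2 ≤ n) :
    (1 / (∑ k ∈ Finset.Icc 1 (n - 1), 1 / Real.sin (π * k / n))) *
        (∑ k ∈ Finset.Icc 1 n,
          Real.cos (π * (2 * k - 1) / (2 * n)) ^ 2 /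
            (1 - Real.cos (π * (2 * k - 1) / (2 * n)) ^ 2 / 2) ^ ((3 : ℝ) / 2)) ≤
      2 * Real.sqrt 2 := by
  set S := ∑ k ∈ Icc 1 (n - 1), 1 / sin (π * k / n)
  have h2n : (2 : ℝ) ≤ n := by exact_mod_cast hn
  have hS : (n : ℝ) - 1 ≤ S := sub_one_le_sum_one_div_sin_pi_mul_div n
  rw [one_div_mul_eq_div, div_le_iff₀ (by linarith)]
  calc _ ≤ ∑ k ∈ Icc 1 n, 2 * √2 * cos (π * (2 * k - 1) / (2 * n)) ^ 2 :=
        sum_le_sum fun k _ => sq_div_one_sub_sq_div_two_rpow_le (cos_sq_le_one _)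
    _ = 2 * √2 * (n / 2) := by rw [← mul_sum, sum_cos_sq_chebyshev_nodes n hn]
    _ ≤ 2 * √2 * S := by gcongr; linarith
end

section
/- For every integer n ≥ 3, csc(π(2n-3)/(2n)) + csc(π(2n-1)/(2n)) < 3·csc(π(n-1)/n). -/
/-!
With `x = π / (2n)` the three angles are `π - 3x`, `π - x` and `π - 2x`, so the claim reads
`1 / sin 3x + 1 / sin x < 3 / sin 2x` for `0 < x ≤ π / 6`. Both terms on the left are compared
with `1 / sin 2x`: `sin 2x < sin 3x` because `sin 3x - sin 2x = 2 sin (x/2) cos (5x/2)`, and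
`sin 2x = 2 sin x cos x < 2 sin x`.
-/

open Real

theorem Real.sin_two_mul_lt_sin_three_mul {x : ℝ} (hx₀ : 0 < x) (hx : x < π / 5) :
    sin (2 * x) < sin (3 * x) := by
  have hdiff : sin (3 * x) - sin (2 * x) = 2 * sin (x / 2) * cos (5 * x / 2) := by
    rw [sin_sub_sin]; ring_nf
  have hsin : 0 < sin (x / 2) := sin_pos_of_pos_of_lt_pi (by positivity) (by linarith)
  have hcos : 0 < cos (5 * x / 2) := cos_pos_of_mem_Ioo ⟨by linarith, by linarith⟩
  nlinarith [mul_pos hsin hcos]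

theorem Real.sin_two_mul_lt_two_mul_sin {x : ℝ} (hx₀ : 0 < x) (hx : x < π) :
    sin (2 * x) < 2 * sin x := by
  have hsin : 0 < sin x := sin_pos_of_pos_of_lt_pi hx₀ hx
  have hcos : cos x < 1 := by
    simpa using cos_lt_cos_of_nonneg_of_le_pi le_rfl hx.le hx₀
  rw [sin_two_mul]
  nlinarith

theorem Real.one_div_sin_three_mul_add_one_div_sin_lt {x : ℝ} (hx₀ : 0 < x) (hx : x < π / 5) :
    1 / sin (3 * x) + 1 / sin x < 3 * (1 / sin (2 * x)) := by
  have hsin₂ : 0 < sin (2 * x) := sin_pos_of_pos_of_lt_pi (by positivity) (by linarith)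
  have h₃ : 1 / sin (3 * x) < 1 / sin (2 * x) :=
    one_div_lt_one_div_of_lt hsin₂ (sin_two_mul_lt_sin_three_mul hx₀ hx)
  have h₁ : 1 / sin x < 2 / sin (2 * x) := by
    rw [div_lt_div_iff₀ (sin_pos_of_pos_of_lt_pi hx₀ (by linarith)) hsin₂]
    linarith [sin_two_mul_lt_two_mul_sin hx₀ (by linarith)]
  linarith [mul_one_div 2 (sin (2 * x))]

theorem last_two_terms (n : ℕ) (hn : 3 ≤ n) :
    1 / Real.sin (π * (2 * n - 3) / (2 * n)) + 1 / Real.sin (π * (2 * n - 1) / (2 * n)) <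
      3 * (1 / Real.sin (π * (n - 1) / n)) := by
  have hn₀ : (n : ℝ) ≠ 0 := by positivity
  set x := π / (2 * n) with hx
  have hx₀ : 0 < x := by positivity
  have hx₅ : x < π / 5 := by
    rw [hx, div_lt_div_iff₀ (by positivity) (by norm_num)]
    have : (3 : ℝ) ≤ n := by exact_mod_cast hn
    nlinarith [pi_pos]
  have e₃ : π * (2 * n - 3) / (2 * n) = π - 3 * x := by rw [hx]; field_simp
  have e₁ : π * (2 * n - 1) / (2 * n) = π - x := by rw [hx]; field_simp
  have e₂ : π * (n - 1) / n = π - 2 * x := by rw [hx]; field_simp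
  rw [e₃, e₁, e₂, sin_pi_sub, sin_pi_sub, sin_pi_sub]
  exact one_div_sin_three_mul_add_one_div_sin_lt hx₀ hx₅
end

section
/- For every integer n ≥ 2, Σ_{k=1}^{n} csc(π(2k-1)/(2n)) < 3·Σ_{k=1}^{n-1} csc(πk/n). -/
/-!
Write `h = π / (2n)`, `a_k = csc ((2k-1)h)` and `s_k = csc (2kh)`. Since
`sin (x + h) ≤ sin x + sin h ≤ 2 sin x` for `h ≤ x ≤ π - h`, we get `a_k ≤ 2 s_k` for `k ≤ n - 2`.
By the symmetry `sin (π - x) = sin x`, the two remaining terms are `a_{n-1} + a_n = csc 3h + csc h`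
while `s_{n-1} = csc 2h`; with `c = cos h ≥ √2/2`, the inequality `csc h + csc 3h < 3 csc 2h`
reduces to `8c³ < 12c² - 3`.
-/

open Real Finset

lemma sin_le_two_mul_sin {x y : ℝ} (hxy : x ≤ y) (hyx : y ≤ 2 * x) (hy : y ≤ π) :
    sin y ≤ 2 * sin x := by
  obtain ⟨h, rfl⟩ : ∃ h, y = x + h := ⟨y - x, by ring⟩
  have hsin_x : 0 ≤ sin x := sin_nonneg_of_nonneg_of_le_pi (by linarith) (by linarith)
  have hsin_h : 0 ≤ sin h := sin_nonneg_of_nonneg_of_le_pi (by linarith) (by linarith)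
  have hsin_h_le : sin h ≤ sin x := by
    have hcos : 0 ≤ cos ((x + h) / 2) := cos_nonneg_of_mem_Icc ⟨by linarith, by linarith⟩
    have hsin : 0 ≤ sin ((x - h) / 2) := sin_nonneg_of_nonneg_of_le_pi (by linarith) (by linarith)
    nlinarith [sin_sub_sin x h]
  rw [sin_add]
  nlinarith [cos_le_one h, cos_le_one x]

lemma one_div_sin_le_two_div_sin {x y : ℝ} (hxy : x ≤ y) (hyx : y ≤ 2 * x) (hy0 : 0 < y)
    (hy : y < π) : 1 / sin x ≤ 2 / sin y := by
  have hsin_y : 0 < sin y := sin_pos_of_pos_of_lt_pi hy0 hy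
  have hsin_x : 0 < sin x := sin_pos_of_pos_of_lt_pi (by linarith) (by linarith)
  rw [div_le_div_iff₀ hsin_x hsin_y]
  linarith [sin_le_two_mul_sin hxy hyx hy.le]

lemma one_div_sin_add_one_div_sin_three_mul_lt {h : ℝ} (h0 : 0 < h) (hh : h ≤ π / 4) :
    1 / sin h + 1 / sin (3 * h) < 3 / sin (2 * h) := by
  have hs : 0 < sin h := sin_pos_of_pos_of_lt_pi h0 (by linarith [pi_pos])
  have hc : 0 < cos h := cos_pos_of_mem_Ioo ⟨by linarith, by linarith⟩
  have hc1 : cos h < 1 := by nlinarith [sin_sq_add_cos_sq h]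
  have hc2 : 1 ≤ 2 * cos h ^ 2 := by
    rw [← sub_nonneg, ← cos_two_mul]
    exact cos_nonneg_of_mem_Icc ⟨by linarith, by linarith⟩
  -- `12c² - 3 - 8c³ = 1 - 4(1 - c)²(2c + 1)`
  have hcubic : 8 * cos h ^ 3 < 12 * cos h ^ 2 - 3 := by
    nlinarith [mul_pos (sub_pos.2 hc1) hc, sq_nonneg (cos h - 1)]
  have hsin3 : sin (3 * h) = sin h * (4 * cos h ^ 2 - 1) := by
    rw [sin_three_mul]; linear_combination (-4 * sin h) * sin_sq_add_cos_sq h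
  have h4c : 0 < 4 * cos h ^ 2 - 1 := by linarith
  rw [hsin3, sin_two_mul, div_add_div _ _ hs.ne' (by positivity),
    div_lt_div_iff₀ (by positivity) (by positivity)]
  nlinarith [mul_pos (mul_pos hs hs) (sub_pos.2 hcubic)]

lemma sum_one_div_sin_odd_mul_lt (m : ℕ) {h : ℝ} (h0 : 0 < h) (hπ : (2 * m + 4) * h = π) :
    ∑ k ∈ Icc 1 (m + 2), 1 / sin ((2 * k - 1) * h) <
      3 * ∑ k ∈ Icc 1 (m + 1), 1 / sin (2 * k * h) := by
  rw [sum_Icc_succ_top (by omega), sum_Icc_succ_top (by omega), sum_Icc_succ_top (by omega)]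
  have hbody : ∑ k ∈ Icc 1 m, 1 / sin ((2 * k - 1) * h) ≤
      2 * ∑ k ∈ Icc 1 m, 1 / sin (2 * k * h) := by
    rw [mul_sum]
    refine sum_le_sum fun k hk => ?_
    have hk1 : (1 : ℝ) ≤ k := by exact_mod_cast (mem_Icc.1 hk).1
    have hkm : (k : ℝ) ≤ m := by exact_mod_cast (mem_Icc.1 hk).2
    rw [mul_one_div]
    exact one_div_sin_le_two_div_sin (by nlinarith) (by nlinarith) (by positivity) (by nlinarith)
  have hpos : 0 ≤ ∑ k ∈ Icc 1 m, 1 / sin (2 * k * h) := by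
    refine sum_nonneg fun k hk => ?_
    have hk1 : (1 : ℝ) ≤ k := by exact_mod_cast (mem_Icc.1 hk).1
    have hkm : (k : ℝ) ≤ m := by exact_mod_cast (mem_Icc.1 hk).2
    exact one_div_nonneg.2 (sin_nonneg_of_nonneg_of_le_pi (by positivity) (by nlinarith))
  have hend : 1 / sin ((2 * ((m + 1 : ℕ) : ℝ) - 1) * h) + 1 / sin ((2 * ((m + 2 : ℕ) : ℝ) - 1) * h)
      < 3 * (1 / sin (2 * ((m + 1 : ℕ) : ℝ) * h)) := by
    rw [show (2 * ((m + 1 : ℕ) : ℝ) - 1) * h = π - 3 * h by push_cast; linarith,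
      show (2 * ((m + 2 : ℕ) : ℝ) - 1) * h = π - h by push_cast; linarith,
      show 2 * ((m + 1 : ℕ) : ℝ) * h = π - 2 * h by push_cast; linarith,
      sin_pi_sub, sin_pi_sub, sin_pi_sub, mul_one_div, add_comm]
    exact one_div_sin_add_one_div_sin_three_mul_lt h0 (by nlinarith [m.cast_nonneg (α := ℝ)])
  linarith

theorem sum_a_lt_three_S (n : ℕ) (hn : 2 ≤ n) :
    (∑ k ∈ Finset.Icc 1 n, 1 / Real.sin (π * (2 * k - 1) / (2 * n))) <
      3 * ∑ k ∈ Finset.Icc 1 (n - 1), 1 / Real.sin (π * k / n) := by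
  obtain ⟨m, rfl⟩ : ∃ m, n = m + 2 := ⟨n - 2, by omega⟩
  set h := π / (2 * ((m + 2 : ℕ) : ℝ)) with hh
  have hodd (k : ℕ) : π * (2 * k - 1) / (2 * ((m + 2 : ℕ) : ℝ)) = (2 * k - 1) * h := by
    rw [hh]; ring
  have heven (k : ℕ) : π * k / ((m + 2 : ℕ) : ℝ) = 2 * k * h := by
    rw [hh]; field_simp
  have hπ : (2 * m + 4) * h = π := by
    rw [hh]; push_cast; field_simp; ring
  simp only [hodd, heven, show m + 2 - 1 = m + 1 from rfl]
  exact sum_one_div_sin_odd_mul_lt m (by positivity) hπ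
end

section
/- In the spatial double-polygon problem, for n ≥ 2 the potential satisfies 4·V(φ_R) ≥ V(0), where V(φ) = (S_n/4)·sec φ + (1/4)·Σ_{k=1}^{n} (1 - c_k² cos²φ)^{-1/2} with c_k = cos(π(2k-1)/(2n)), S_n = Σ_{k=1}^{n-1} csc(πk/n), and φ_R ∈ (0, π/2) any point. -/
open Real Finset

noncomputable def Ssum (n : ℕ) : ℝ := ∑ k ∈ Finset.Icc 1 (n - 1), 1 / Real.sin (π * k / n)

noncomputable def Vspatial (n : ℕ) (φ : ℝ) : ℝ :=
  Ssum n / 4 * (1 / Real.cos φ) +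
    (1 / 4) * ∑ k ∈ Finset.Icc 1 n,
      (1 - Real.cos (π * (2 * k - 1) / (2 * n)) ^ 2 * Real.cos φ ^ 2) ^ (-(1 : ℝ) / 2)

/-
At `φ = 0` the `k`-th summand is `(1 - cos² θₖ)^(-1/2) = csc θₖ` with `θₖ = π(2k-1)/(2n)`, so
`4 V(0) = Sₙ + Tₙ` where `Tₙ = ∑ₖ csc θₖ`, while `4 V(φ) ≥ Sₙ sec φ ≥ Sₙ`. It remains to see
`Tₙ ≤ 3 Sₙ`. Since `sin` is concave on `[0, π]`, `csc` at a point of `[a, b] ⊆ (0, π)` is at most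
`csc a + csc b`; for `2 ≤ k ≤ n - 1` the angle `θₖ` lies between `π(k-1)/n` and `πk/n`, so these terms
contribute at most `2 Sₙ - 2 csc(π/n)`. The two extreme terms equal `csc(π/(2n)) ≤ 2 csc(π/n)`, and
for `n ≥ 3` the first and last terms of `Sₙ` already give `2 csc(π/n) ≤ Sₙ`; for `n = 2` one checks
`2√2 ≤ 3` directly.
-/

lemma sum_Icc_one_eq_sum_range {M : Type*} [AddCommMonoid M] (f : ℕ → M) (N : ℕ) :
    ∑ k ∈ Icc 1 N, f k = ∑ k ∈ range N, f (k + 1) := by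
  rw [← Ico_add_one_right_eq_Icc, sum_Ico_eq_sum_range, add_tsub_cancel_right]
  simp only [add_comm]

lemma sin_pi_mul_div_pos {a b : ℝ} (ha : 0 < a) (hab : a < b) : 0 < sin (π * a / b) :=
  sin_pos_of_pos_of_lt_pi (by have := ha.trans hab; positivity)
    (by rw [div_lt_iff₀ (ha.trans hab)]; nlinarith [pi_pos])

lemma sin_pi_mul_succ_div_pos {k n : ℕ} (hk : k + 1 < n) : 0 < sin (π * (k + 1) / n) :=
  sin_pi_mul_div_pos (by positivity) (by exact_mod_cast hk)

lemma one_div_sin_le_add_of_mem_Icc {a b x : ℝ} (ha : 0 < a) (hx : x ∈ Set.Icc a b)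
    (hb : b < π) : 1 / sin x ≤ 1 / sin a + 1 / sin b := by
  obtain ⟨hax, hxb⟩ := hx
  have hsa : 0 < sin a := sin_pos_of_pos_of_lt_pi ha (by linarith)
  have hsb : 0 < sin b := sin_pos_of_pos_of_lt_pi (by linarith) hb
  rcases le_total x (π / 2) with h | h
  · have : 1 / sin x ≤ 1 / sin a :=
      one_div_le_one_div_of_le hsa (sin_le_sin_of_le_of_le_pi_div_two (by linarith) h hax)
    linarith [one_div_pos.2 hsb]
  · have : sin b ≤ sin x := by
      rw [← sin_pi_sub x, ← sin_pi_sub b]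
      exact sin_le_sin_of_le_of_le_pi_div_two (by linarith) (by linarith) (by linarith)
    linarith [one_div_le_one_div_of_le hsb this, one_div_pos.2 hsa]

lemma one_div_sin_half_le {x : ℝ} (hx0 : 0 < x) (hxπ : x < π) :
    1 / sin (x / 2) ≤ 2 / sin x := by
  have hs : 0 < sin (x / 2) := sin_pos_of_pos_of_lt_pi (by linarith) (by linarith)
  have hsx : sin x = 2 * sin (x / 2) * cos (x / 2) := by
    rw [← sin_two_mul, mul_div_cancel₀ _ two_ne_zero]
  rw [hsx, div_le_div_iff₀ hs (by rw [← hsx]; exact sin_pos_of_pos_of_lt_pi hx0 hxπ)]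
  nlinarith [cos_le_one (x / 2)]

lemma Ssum_eq_sum_range (n : ℕ) :
    Ssum n = ∑ k ∈ range (n - 1), 1 / sin (π * (k + 1) / n) := by
  rw [Ssum, sum_Icc_one_eq_sum_range]
  push_cast
  rfl

lemma Ssum_nonneg (n : ℕ) : 0 ≤ Ssum n := by
  rw [Ssum_eq_sum_range]
  exact sum_nonneg fun k hk =>
    (one_div_pos.2 (sin_pi_mul_succ_div_pos (by have := mem_range.1 hk; omega))).le

lemma Ssum_eq_sum_add_last {n : ℕ} (hn : 2 ≤ n) :
    Ssum n = ∑ k ∈ range (n - 2), 1 / sin (π * (k + 1) / n) + 1 / sin (π / n) := by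
  have hn0 : (n : ℝ) ≠ 0 := by positivity
  rw [Ssum_eq_sum_range, show n - 1 = n - 2 + 1 by omega, sum_range_succ, ← sin_pi_sub (π / n),
    Nat.cast_sub hn]
  congr 3
  field_simp
  ring

lemma Ssum_eq_first_add_sum {n : ℕ} (hn : 2 ≤ n) :
    Ssum n = 1 / sin (π / n) + ∑ k ∈ range (n - 2), 1 / sin (π * (k + 2) / n) := by
  rw [Ssum_eq_sum_range, show n - 1 = n - 2 + 1 by omega, sum_range_succ', add_comm]
  push_cast
  ring_nf

lemma two_mul_one_div_sin_le_Ssum {n : ℕ} (hn : 3 ≤ n) : 2 * (1 / sin (π / n)) ≤ Ssum n := by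
  have hpos : ∀ k ∈ range (n - 2), 0 ≤ 1 / sin (π * ((k : ℕ) + 1) / n) := fun k hk =>
    (one_div_pos.2 (sin_pi_mul_succ_div_pos (by have := mem_range.1 hk; omega))).le
  have hfirst := single_le_sum hpos (mem_range.2 (by omega : 0 < n - 2))
  rw [Nat.cast_zero, zero_add, mul_one] at hfirst
  linarith [Ssum_eq_sum_add_last (by omega : 2 ≤ n)]

noncomputable def Tsum (n : ℕ) : ℝ := ∑ k ∈ Icc 1 n, 1 / sin (π * (2 * k - 1) / (2 * n))

lemma Tsum_eq_sum_range (n : ℕ) :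
    Tsum n = ∑ k ∈ range n, 1 / sin (π * (2 * k + 1) / (2 * n)) := by
  rw [Tsum, sum_Icc_one_eq_sum_range]
  refine sum_congr rfl fun k _ => ?_
  push_cast
  ring_nf

lemma Tsum_eq_two_mul_add_sum {n : ℕ} (hn : 2 ≤ n) :
    Tsum n = 2 * (1 / sin (π / (2 * n))) +
      ∑ k ∈ range (n - 2), 1 / sin (π * (2 * k + 3) / (2 * n)) := by
  have h_first : π * (2 * ((0 : ℕ) : ℝ) + 1) / (2 * n) = π / (2 * n) := by push_cast; ring
  have h_last : π * (2 * ((n - 2 + 1 : ℕ) : ℝ) + 1) / (2 * n) = π - π / (2 * n) := by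
    have hn0 : (n : ℝ) ≠ 0 := by positivity
    rw [show n - 2 + 1 = n - 1 by omega, Nat.cast_sub (by omega)]
    field_simp
    ring
  have h_mid : ∑ k ∈ range (n - 2), 1 / sin (π * (2 * ((k + 1 : ℕ) : ℝ) + 1) / (2 * n)) =
      ∑ k ∈ range (n - 2), 1 / sin (π * (2 * k + 3) / (2 * n)) :=
    sum_congr rfl fun k _ => by push_cast; ring_nf
  rw [Tsum_eq_sum_range, show n = n - 2 + 1 + 1 by omega, sum_range_succ, sum_range_succ',
    ← show n = n - 2 + 1 + 1 by omega, h_first, h_last, sin_pi_sub, h_mid]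
  ring

lemma Tsum_le_two_mul_Ssum_add {n : ℕ} (hn : 2 ≤ n) :
    Tsum n ≤ 2 * Ssum n + 2 * (1 / sin (π / (2 * n)) - 1 / sin (π / n)) := by
  have hmid : ∑ k ∈ range (n - 2), 1 / sin (π * (2 * k + 3) / (2 * n)) ≤
      ∑ k ∈ range (n - 2), (1 / sin (π * (k + 1) / n) + 1 / sin (π * (k + 2) / n)) := by
    refine sum_le_sum fun k hk => ?_
    have hkn : (k : ℝ) + 2 < n := by exact_mod_cast (by have := mem_range.1 hk; omega : k + 2 < n)
    rw [show π * (2 * k + 3) / (2 * n) = π * (k + 3 / 2) / n by ring]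
    refine one_div_sin_le_add_of_mem_Icc (by positivity) ⟨?_, ?_⟩ ?_
    · gcongr; linarith
    · gcongr; linarith
    · rw [div_lt_iff₀ (by linarith)]; nlinarith [pi_pos]
  rw [sum_add_distrib] at hmid
  linarith [Tsum_eq_two_mul_add_sum hn, Ssum_eq_sum_add_last hn, Ssum_eq_first_add_sum hn]

lemma Tsum_le_three_mul_Ssum {n : ℕ} (hn : 2 ≤ n) : Tsum n ≤ 3 * Ssum n := by
  have hT := Tsum_le_two_mul_Ssum_add hn
  rcases hn.eq_or_lt with rfl | hn3
  · have hS : Ssum 2 = 1 := by norm_num [Ssum]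
    have h2 : π / (2 * ((2 : ℕ) : ℝ)) = π / 4 := by push_cast; ring
    rw [hS, h2, sin_pi_div_four, Nat.cast_ofNat, sin_pi_div_two] at hT
    have h_sqrt : 1 / (√2 / 2) = √2 := by
      field_simp
      rw [sq_sqrt zero_le_two]
    have h_sqrt_le : √2 ≤ 3 / 2 := by
      rw [sqrt_le_left (by norm_num)]
      norm_num
    linarith
  · have h_half : 1 / sin (π / (2 * n)) ≤ 2 / sin (π / n) := by
      rw [show π / (2 * n) = π / n / 2 by ring]
      exact one_div_sin_half_le (by positivity)
        (div_lt_self pi_pos (by exact_mod_cast hn3.trans' one_lt_two))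
    rw [← mul_one_div (2 : ℝ)] at h_half
    linarith [two_mul_one_div_sin_le_Ssum hn3]

lemma Vspatial_zero (n : ℕ) : Vspatial n 0 = (Ssum n + Tsum n) / 4 := by
  have hsum : ∑ k ∈ Icc 1 n,
      (1 - cos (π * (2 * k - 1) / (2 * n)) ^ 2 * cos 0 ^ 2) ^ (-(1 : ℝ) / 2) = Tsum n := by
    refine sum_congr rfl fun k hk => ?_
    obtain ⟨hk1, hkn⟩ := mem_Icc.1 hk
    have hk1' : (1 : ℝ) ≤ k := by exact_mod_cast hk1
    have hkn' : (k : ℝ) ≤ n := by exact_mod_cast hkn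
    have hs : 0 < sin (π * (2 * k - 1) / (2 * n)) :=
      sin_pi_mul_div_pos (by linarith) (by linarith)
    rw [cos_zero, one_pow, mul_one, ← sin_sq, neg_div, rpow_neg (sq_nonneg _), ← sqrt_eq_rpow,
      sqrt_sq hs.le, one_div]
  rw [Vspatial, hsum, cos_zero]
  ring

lemma Ssum_le_four_mul_Vspatial (n : ℕ) {φ : ℝ} (hφ : φ ∈ Set.Ioo (-(π / 2)) (π / 2)) :
    Ssum n ≤ 4 * Vspatial n φ := by
  have hcos : 0 < cos φ := cos_pos_of_mem_Ioo hφ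
  have hsec : 1 ≤ 1 / cos φ := by rw [le_div_iff₀ hcos, one_mul]; exact cos_le_one φ
  have hsum : 0 ≤ ∑ k ∈ Icc 1 n,
      (1 - cos (π * (2 * k - 1) / (2 * n)) ^ 2 * cos φ ^ 2) ^ (-(1 : ℝ) / 2) :=
    sum_nonneg fun k _ => rpow_nonneg (by
      nlinarith [cos_sq_le_one (π * (2 * k - 1) / (2 * n)), cos_sq_le_one φ, sq_nonneg (cos φ)]) _
  have hS_sec := mul_le_mul_of_nonneg_left hsec (Ssum_nonneg n)
  rw [Vspatial]
  linarith

theorem four_V_phiR_ge_V_zero (n : ℕ) (hn : 2 ≤ n) (φR : ℝ)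
    (hφR : φR ∈ Set.Ioo 0 (π / 2)) :
    4 * Vspatial n φR ≥ Vspatial n 0 := by
  have hS : Ssum n ≤ 4 * Vspatial n φR :=
    Ssum_le_four_mul_Vspatial n ⟨by linarith [hφR.1, pi_pos], hφR.2⟩
  rw [ge_iff_le, Vspatial_zero]
  linarith [Tsum_le_three_mul_Ssum hn]
end

section
/- The improper integral ∫₀^{π/2} √(1/(2 cos φ) - (1.32)²/4) dφ, taken over the set where the integrand is real, is greater than 1.32. -/
/-!
Substituting `t = π/2 - φ` turns the integrand into `√(1/(2 sin t) - c)` with `c = 1.32²/4`.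
Jordan's inequality `sin t ≥ 2t/π` bounds it by a multiple of `t^(-1/2)`, so it is integrable.
From below, `sin t ≤ t - t³/6 + t⁵/120` reduces the pointwise bound
`√(1/(2 sin t) - c) ≥ (1 - 0.46 t)/√(2t)` on `[0, 25/16]` to a polynomial inequality, and the
minorant integrates to `√(25/8) (1 - 0.46 · 25/48) ≈ 1.344`.
-/

open Real intervalIntegral MeasureTheory Set

namespace Real

theorem cos_le_one_sub_sq_div_two_add_pow_four (x : ℝ) :
    cos x ≤ 1 - x ^ 2 / 2 + x ^ 4 / 24 := by
  let f (t : ℝ) : ℝ := 1 - t ^ 2 / 2 + t ^ 4 / 24 - cos t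
  have hderiv (t : ℝ) : deriv f t = sin t - (t - t ^ 3 / 6) := by
    simp (disch := fun_prop) [f]
    ring
  have hmono : MonotoneOn f (Ici 0) := by
    refine monotoneOn_of_deriv_nonneg (convex_Ici 0) (by fun_prop) (by fun_prop) fun t ht ↦ ?_
    rw [interior_Ici] at ht
    rw [hderiv, sub_nonneg]
    exact sin_ge_sub_cube ht.out.le
  have := hmono self_mem_Ici (abs_nonneg x) (abs_nonneg x)
  norm_num [f, cos_abs, Even.pow_abs (by decide : Even 4)] at this
  linarith

theorem sin_le_sub_cube_add_pow_five {x : ℝ} (hx : 0 ≤ x) :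
    sin x ≤ x - x ^ 3 / 6 + x ^ 5 / 120 := by
  let f (t : ℝ) : ℝ := t - t ^ 3 / 6 + t ^ 5 / 120 - sin t
  have hderiv (t : ℝ) : deriv f t = 1 - t ^ 2 / 2 + t ^ 4 / 24 - cos t := by
    simp (disch := fun_prop) [f]
    ring
  have hmono : MonotoneOn f (Ici 0) := by
    refine monotoneOn_of_deriv_nonneg (convex_Ici 0) (by fun_prop) (by fun_prop) fun t _ ↦ ?_
    rw [hderiv, sub_nonneg]
    exact cos_le_one_sub_sq_div_two_add_pow_four t
  have := hmono self_mem_Ici hx hx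
  norm_num [f] at this
  linarith

end Real

lemma inv_sqrt_eq_rpow {t : ℝ} (ht : 0 ≤ t) : (√t)⁻¹ = t ^ (-(1 / 2) : ℝ) := by
  rw [sqrt_eq_rpow, rpow_neg ht]

lemma intervalIntegrable_inv_sqrt {T : ℝ} (hT : 0 ≤ T) :
    IntervalIntegrable (fun t ↦ (√t)⁻¹) volume 0 T :=
  (intervalIntegrable_rpow' (by norm_num)).congr_uIoo fun t ht ↦
    (inv_sqrt_eq_rpow (by rw [uIoo_of_le hT] at ht; exact ht.1.le)).symm

lemma integral_inv_sqrt {T : ℝ} (hT : 0 ≤ T) : ∫ t in 0..T, (√t)⁻¹ = 2 * √T := by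
  rw [integral_congr fun t ht ↦ inv_sqrt_eq_rpow (by rw [uIcc_of_le hT] at ht; exact ht.1),
    integral_rpow (by norm_num), sqrt_eq_rpow]
  norm_num
  ring

lemma integral_sqrt {T : ℝ} (hT : 0 ≤ T) : ∫ t in 0..T, √t = 2 / 3 * T * √T := by
  rw [integral_congr fun t _ ↦ sqrt_eq_rpow t, integral_rpow (by norm_num), sqrt_eq_rpow,
    show (1 / 2 + 1 : ℝ) = 1 + 1 / 2 by norm_num, rpow_add' hT (by norm_num)]
  norm_num
  ring

lemma one_sub_mul_div_sqrt_two_mul_eq (a : ℝ) {t : ℝ} (ht : 0 ≤ t) :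
    (1 - a * t) / √(2 * t) = (√2)⁻¹ * ((√t)⁻¹ - a * √t) := by
  rcases ht.eq_or_lt with rfl | ht
  · simp
  have := sqrt_pos.2 ht
  rw [sqrt_mul zero_le_two]
  field_simp
  rw [sq_sqrt ht.le]

lemma intervalIntegrable_one_sub_mul_div_sqrt_two_mul (a : ℝ) {T : ℝ} (hT : 0 ≤ T) :
    IntervalIntegrable (fun t ↦ (1 - a * t) / √(2 * t)) volume 0 T := by
  refine (((intervalIntegrable_inv_sqrt hT).sub
    ((continuous_sqrt.intervalIntegrable 0 T).const_mul a)).const_mul (√2)⁻¹).congr_uIoo ?_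
  intro t ht
  rw [uIoo_of_le hT] at ht
  exact (one_sub_mul_div_sqrt_two_mul_eq a ht.1.le).symm

lemma integral_one_sub_mul_div_sqrt_two_mul (a : ℝ) {T : ℝ} (hT : 0 ≤ T) :
    ∫ t in 0..T, (1 - a * t) / √(2 * t) = √(2 * T) * (1 - a * T / 3) := by
  rw [integral_congr fun t ht ↦
      one_sub_mul_div_sqrt_two_mul_eq a (by rw [uIcc_of_le hT] at ht; exact ht.1),
    intervalIntegral.integral_const_mul, integral_sub (intervalIntegrable_inv_sqrt hT)
      ((continuous_sqrt.intervalIntegrable 0 T).const_mul a),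
    intervalIntegral.integral_const_mul, integral_inv_sqrt hT, integral_sqrt hT,
    sqrt_mul zero_le_two]
  have : (0 : ℝ) < √2 := by positivity
  field_simp
  rw [sq_sqrt zero_le_two]

lemma sqrt_one_div_two_sin_sub_le {c t : ℝ} (hc : 0 ≤ c) (ht₀ : 0 < t) (ht : t ≤ π / 2) :
    √(1 / (2 * sin t) - c) ≤ √(π / 4) * (√t)⁻¹ := by
  have hsin : 2 / π * t ≤ sin t := mul_le_sin ht₀.le ht
  have : 1 / (2 * sin t) ≤ π / 4 / t := calc
    1 / (2 * sin t) ≤ 1 / (4 * t / π) :=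
      one_div_le_one_div_of_le (by positivity)
        (by linarith [show 4 * t / π = 2 * (2 / π * t) by ring])
    _ = π / 4 / t := by field_simp
  rw [← sqrt_inv, ← sqrt_mul (by positivity)]
  exact sqrt_le_sqrt (by rw [← div_eq_mul_inv]; linarith)

lemma intervalIntegrable_sqrt_one_div_two_sin_sub {c : ℝ} (hc : 0 ≤ c) :
    IntervalIntegrable (fun t ↦ √(1 / (2 * sin t) - c)) volume 0 (π / 2) := by
  refine ((intervalIntegrable_inv_sqrt pi_div_two_pos.le).const_mul √(π / 4)).mono_fun'
    (Measurable.aestronglyMeasurable (by fun_prop)) ?_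
  rw [uIoc_of_le pi_div_two_pos.le]
  filter_upwards [ae_restrict_mem measurableSet_Ioc] with t ht
  rw [norm_of_nonneg (sqrt_nonneg _)]
  exact sqrt_one_div_two_sin_sub_le hc ht.1 ht.2

lemma integral_sqrt_one_div_two_cos_sub (c : ℝ) :
    ∫ φ in 0..π / 2, √(1 / (2 * cos φ) - c) =
      ∫ t in 0..π / 2, √(1 / (2 * sin t) - c) := by
  simpa [sin_pi_div_two_sub] using
    integral_comp_sub_left (fun t ↦ √(1 / (2 * sin t) - c)) (a := 0) (b := π / 2) (π / 2)

lemma one_sub_mul_div_sqrt_two_mul_le_sqrt {a c t S : ℝ} (ht : 0 < t) (hsin : 0 < sin t)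
    (hS : sin t ≤ S) (hpoly : (1 - a * t) ^ 2 * S ≤ t * (1 - 2 * c * S)) :
    (1 - a * t) / √(2 * t) ≤ √(1 / (2 * sin t) - c) := by
  refine le_sqrt_of_sq_le ?_
  have hS₀ : 0 < S := hsin.trans_le hS
  calc ((1 - a * t) / √(2 * t)) ^ 2 = (1 - a * t) ^ 2 / (2 * t) := by
        rw [div_pow, sq_sqrt (by positivity)]
    _ ≤ 1 / (2 * S) - c := by
        rw [div_le_iff₀ (by positivity)]
        field_simp
        nlinarith
    _ ≤ 1 / (2 * sin t) - c := by gcongr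

lemma one_sub_mul_sq_mul_sin_taylor_le {t : ℝ} (h₀ : 0 ≤ t) (h₁ : t ≤ 25 / 16) :
    (1 - 0.46 * t) ^ 2 * (t - t ^ 3 / 6 + t ^ 5 / 120)
      ≤ t * (1 - 2 * (1.32 ^ 2 / 4) * (t - t ^ 3 / 6 + t ^ 5 / 120)) := by
  -- the difference of the two sides is `t²` times this quintic
  have : 0 ≤ t / 6 - t ^ 3 / 120 + 2 * (0.46 - 1.32 ^ 2 / 4) * (1 - t ^ 2 / 6 + t ^ 4 / 120)
      - 0.46 ^ 2 * t * (1 - t ^ 2 / 6 + t ^ 4 / 120) := by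
    nlinarith [mul_nonneg h₀ (sub_nonneg.2 h₁), sq_nonneg (t - 0.9),
      mul_nonneg h₀ (sq_nonneg (t - 0.9)), mul_nonneg (mul_nonneg h₀ h₀) (sub_nonneg.2 h₁)]
  nlinarith [mul_nonneg (sq_nonneg t) this]

theorem integral_gt :
    (∫ φ in (0 : ℝ)..(π / 2),
        Real.sqrt (1 / (2 * Real.cos φ) - 1.32 ^ 2 / 4)) > 1.32 := by
  have hT : (25 / 16 : ℝ) ≤ π / 2 := by linarith [pi_gt_d2]
  have hint := intervalIntegrable_sqrt_one_div_two_sin_sub (c := 1.32 ^ 2 / 4) (by norm_num)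
  rw [integral_sqrt_one_div_two_cos_sub, gt_iff_lt]
  calc (1.32 : ℝ) < √(2 * (25 / 16)) * (1 - 0.46 * (25 / 16) / 3) := by
        nlinarith [show (1.76 : ℝ) < √(2 * (25 / 16)) from lt_sqrt_of_sq_lt (by norm_num)]
    _ = ∫ t in 0..25 / 16, (1 - 0.46 * t) / √(2 * t) :=
        (integral_one_sub_mul_div_sqrt_two_mul _ (by norm_num)).symm
    _ ≤ ∫ t in 0..25 / 16, √(1 / (2 * sin t) - 1.32 ^ 2 / 4) := by
        refine integral_mono_on_of_le_Ioo (by norm_num)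
          (intervalIntegrable_one_sub_mul_div_sqrt_two_mul _ (by norm_num))
          (hint.mono_set (uIcc_subset_uIcc_left (mem_uIcc_of_le (by norm_num) hT))) fun t ht ↦ ?_
        exact one_sub_mul_div_sqrt_two_mul_le_sqrt ht.1
          (sin_pos_of_pos_of_lt_pi ht.1 (by linarith [ht.2, pi_gt_three]))
          (sin_le_sub_cube_add_pow_five ht.1.le)
          (one_sub_mul_sq_mul_sin_taylor_le ht.1.le ht.2.le)
    _ ≤ ∫ t in 0..π / 2, √(1 / (2 * sin t) - 1.32 ^ 2 / 4) :=
        integral_mono_interval le_rfl (by norm_num) hT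
          (Filter.Eventually.of_forall fun _ ↦ sqrt_nonneg _) hint
end
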